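/- Let X be a separable Banach space in which every pair of vectors is parallel, i.e., for all x, y ∈ X there exists a unimodular scalar λ with ‖x + λy‖ = ‖x‖ + ‖y‖. Then dim(X) ≤ 1. -/

import Mathlib

/-!
A bound on the rank can be checked on finite-dimensional subspaces, where the norm has a point `x`
of differentiability. Its derivative `f` is the only real functional with `f ≤ ‖·‖` and
`f x = ‖x‖`. If `‖x + l • y‖ = ‖x‖ + ‖y‖`, a norming functional of `x + l • y` also norms `x` and
`l • y`, so it is `f`, and `f (l • y) = ‖y‖`. Hence the `𝕜`-linear extension of `f` vanishes
only at `0`, and the space embeds into `𝕜`.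
-/

open RCLike

def Parallel (𝕜 : Type*) {E : Type*} [RCLike 𝕜] [NormedAddCommGroup E] [NormedSpace 𝕜 E]
    (x y : E) : Prop :=
  ∃ l : 𝕜, ‖l‖ = 1 ∧ ‖x + l • y‖ = ‖x‖ + ‖y‖

section Real

variable {E : Type*} [NormedAddCommGroup E] [NormedSpace ℝ E]

theorem DifferentiableAt.eq_fderiv_norm_of_le_norm {x : E} (hx : DifferentiableAt ℝ (‖·‖) x)
    {g : StrongDual ℝ E} (hg : ∀ w, g w ≤ ‖w‖) (hgx : g x = ‖x‖) : g = fderiv ℝ (‖·‖) x := by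
  have hmin : IsLocalMin (fun w => ‖w‖ - g w) x :=
    Filter.Eventually.of_forall fun w => by simp only [hgx, sub_self, sub_nonneg, hg]
  exact (sub_eq_zero.1 (hmin.hasFDerivAt_eq_zero (hx.hasFDerivAt.sub g.hasFDerivAt))).symm

theorem DifferentiableAt.fderiv_norm_apply_eq_norm_of_norm_add [Nontrivial E] {x y : E}
    (hx : DifferentiableAt ℝ (‖·‖) x) (hxy : ‖x + y‖ = ‖x‖ + ‖y‖) :
    fderiv ℝ (‖·‖) x y = ‖y‖ := by
  obtain ⟨g, hg, hgxy⟩ := exists_dual_vector' ℝ (x + y)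
  have hle (w : E) : g w ≤ ‖w‖ := by
    simpa [hg] using (le_abs_self (g w)).trans (g.le_opNorm w)
  have hsum : g x + g y = ‖x‖ + ‖y‖ := by rw [← map_add, hgxy, hxy]; rfl
  have hgx : g x = ‖x‖ := by linarith [hle x, hle y]
  have hgy : g y = ‖y‖ := by linarith [hle x, hle y]
  rw [← hx.eq_fderiv_norm_of_le_norm hle hgx, hgy]

end Real

section

variable {𝕜 E : Type*} [RCLike 𝕜] [NormedAddCommGroup E] [NormedSpace 𝕜 E]

theorem DifferentiableAt.injective_extendRCLike_fderiv_norm [NormedSpace ℝ E]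
    [IsScalarTower ℝ 𝕜 E] [Nontrivial E] {x : E} (hx : DifferentiableAt ℝ (‖·‖) x)
    (h : ∀ y : E, Parallel 𝕜 x y) :
    Function.Injective (Module.Dual.extendRCLike (𝕜 := 𝕜) (fderiv ℝ (‖·‖) x).toLinearMap) := by
  refine (injective_iff_map_eq_zero _).2 fun y hy => norm_eq_zero.1 ?_
  obtain ⟨l, hl, hxy⟩ := h y
  have hly : ‖l • y‖ = ‖y‖ := by rw [norm_smul, hl, one_mul]
  calc ‖y‖ = fderiv ℝ (‖·‖) x (l • y) := by
        rw [hx.fderiv_norm_apply_eq_norm_of_norm_add (hly.symm ▸ hxy), hly]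
    _ = re (Module.Dual.extendRCLike (𝕜 := 𝕜) (fderiv ℝ (‖·‖) x).toLinearMap (l • y)) :=
        (Module.Dual.re_extendRCLike_apply _ _).symm
    _ = 0 := by rw [map_smul, hy, smul_zero, map_zero]

theorem rank_le_one_of_forall_parallel [FiniteDimensional 𝕜 E]
    (h : ∀ x y : E, Parallel 𝕜 x y) : Module.rank 𝕜 E ≤ 1 := by
  rcases subsingleton_or_nontrivial E with _ | _
  · simp [rank_subsingleton']
  let _ : NormedSpace ℝ E := NormedSpace.restrictScalars ℝ 𝕜 E
  have : FiniteDimensional ℝ E := .trans ℝ 𝕜 E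
  obtain ⟨x, hx⟩ : ∃ x : E, DifferentiableAt ℝ (‖·‖) x := dense_differentiableAt_norm.nonempty
  simpa using LinearMap.lift_rank_le_of_injective _ (hx.injective_extendRCLike_fderiv_norm (h x))

end

theorem dim_le_one_of_all_parallel_general {𝕜 X : Type*} [RCLike 𝕜] [NormedAddCommGroup X]
    [NormedSpace 𝕜 X]
    (h : ∀ x y : X, ∃ l : 𝕜, ‖l‖ = 1 ∧ ‖x + l • y‖ = ‖x‖ + ‖y‖) :
    Module.rank 𝕜 X ≤ 1 := by
  refine rank_le fun s hs => ?_
  have hspan : ∀ x y : Submodule.span 𝕜 (s : Set X), Parallel 𝕜 x y := fun x y => by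
    simpa [Parallel] using h x y
  have hrank := rank_le_one_of_forall_parallel hspan
  rw [rank_span_set hs] at hrank
  simpa using hrank

/-- A separable Banach space in which every pair of vectors is parallel has dimension at most 1. -/
theorem dim_le_one_of_all_parallel {𝕜 X : Type*} [RCLike 𝕜] [NormedAddCommGroup X]
    [NormedSpace 𝕜 X] [CompleteSpace X] [TopologicalSpace.SeparableSpace X]
    (h : ∀ x y : X, ∃ l : 𝕜, ‖l‖ = 1 ∧ ‖x + l • y‖ = ‖x‖ + ‖y‖) :
    Module.rank 𝕜 X ≤ 1 :=
  dim_le_one_of_all_parallel_general h
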